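/- arXiv:1610.00488 — 2 statements merged into one kernel-verified Lean document; each statement's English description precedes it below -/
import Mathlib

section
/- Let K be an algebraic number field of class number one, of degree l over ℚ, and assume the abc conjecture for K. Let η be a unit in O_K satisfying |η| > 1 and |η^(j)| < 1 for all j ≠ 1, where η^(1) = η, η^(2), …, η^(l) are the conjugates of η under the l embeddings of K into ℂ. Then there exist infinitely many non-Wieferich primes in O_K with respect to the base η, i.e., the set of prime elements π of O_K with η^(N(π)−1) ≢ 1 (mod π²) is infinite. -/
open NumberField IsDedekindDomain Filter
open scoped Classical

variable (K : Type*) [Field K] [NumberField K]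

/-- The absolute value of the norm `N_{K/ℚ}` of an algebraic integer, as a natural number. -/
noncomputable def absNormElem (x : 𝓞 K) : ℕ := (Algebra.norm ℤ x).natAbs

/-- `v_𝔭(p)`: the ramification index of the prime ideal `𝔭 = v.asIdeal` over the rational
prime `p` lying below it (`pℤ = 𝔭 ∩ ℤ`). -/
noncomputable def ramIdxOverQ (v : HeightOneSpectrum (𝓞 K)) : ℕ :=
  Ideal.ramificationIdx'
    (Ideal.comap (algebraMap ℤ (𝓞 K)) v.asIdeal) v.asIdeal

/-- `‖x‖_v = N(𝔭)^(−v_𝔭(x))` for a finite place `v`, with `‖0‖_v = 0`. -/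
noncomputable def normAtFin (v : HeightOneSpectrum (𝓞 K)) (x : K) : ℝ :=
  if h : v.valuation K x = 0 then 0
  else (Ideal.absNorm v.asIdeal : ℝ) ^ (Multiplicative.toAdd (WithZero.unzero h))

/-- `‖x‖_w = |g(x)|^e` for an archimedean place `w`, where `e = 1` if `w` is real and
`e = 2` if `w` is complex. -/
noncomputable def normAtInf (w : InfinitePlace K) (x : K) : ℝ := (w x) ^ w.mult

/-- The height `H_K(a,b,c) = ∏_v max(‖a‖_v, ‖b‖_v, ‖c‖_v)`, the product running over all
(finite and infinite) places of `K`. -/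
noncomputable def heightK (a b c : K) : ℝ :=
  (∏ᶠ v : HeightOneSpectrum (𝓞 K),
      max (max (normAtFin K v a) (normAtFin K v b)) (normAtFin K v c)) *
  ∏ w : InfinitePlace K,
      max (max (normAtInf K w a) (normAtInf K w b)) (normAtInf K w c)

/-- The radical `rad_K(a,b,c) = ∏_{𝔭 ∈ I_K(a,b,c)} N(𝔭)^(v_𝔭(p))`, where `I_K(a,b,c)` is the
set of prime ideals of `𝓞 K` at which `‖a‖_v, ‖b‖_v, ‖c‖_v` are not all equal. -/
noncomputable def radK (a b c : K) : ℝ :=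
  ∏ᶠ v : HeightOneSpectrum (𝓞 K),
    if normAtFin K v a = normAtFin K v b ∧ normAtFin K v b = normAtFin K v c then 1
    else (Ideal.absNorm v.asIdeal : ℝ) ^ (ramIdxOverQ K v)

/-- The abc conjecture for the number field `K`: for every `δ > 0` there is a constant
`C(K,δ)` such that `H_K(a,b,c) ≤ C(K,δ) · rad_K(a,b,c)^(1+δ)` for all nonzero
`a, b, c ∈ K` with `a + b + c = 0`. -/
noncomputable def AbcConjecture : Prop :=
  ∀ δ : ℝ, 0 < δ → ∃ C : ℝ, 0 < C ∧ ∀ a b c : K, a ≠ 0 → b ≠ 0 → c ≠ 0 →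
    a + b + c = 0 → heightK K a b c ≤ C * (radK K a b c) ^ (1 + δ)

/-! If every prime were Wieferich for `η`, every `η ^ n - 1` would be powerful: since
`π ∤ N(π) - 1`, the geometric-sum factorisation of `η ^ (n (N(π) - 1)) - 1` lifts
`η ^ n ≡ 1 (mod π)` to a congruence modulo `π ^ 2`. For a unit `ε`, the height of the abc triple
`(ε, -1, 1 - ε)` is at least the Weil height `H(ε)`, and `|N(ε - 1)| ≤ 4 ^ r H(ε)` with `r` the
number of infinite places; the radical of a powerful `m` is at most a constant times
`|N(m)| ^ (1/2)`, the ramified primes being absorbed by the different. The abc conjecture with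
`δ = 1/2` then bounds `H(η ^ n) = H(η) ^ n`, although `H(η) ≥ |η| > 1`. One non-Wieferich prime
`π` gives infinitely many: its associates `η ^ k π`. -/

open Height

theorem Prime.pow_dvd_sub_one_of_pow_dvd_pow_sub_one {R : Type*} [CommRing R] [IsDomain R]
    {π α : R} (hπ : Prime π) (hα : π ∣ α - 1) {M : ℕ} (hM : ¬ π ∣ (M : R)) {n : ℕ}
    (hαM : π ^ n ∣ α ^ M - 1) : π ^ n ∣ α - 1 := by
  have hπα : ¬ π ∣ α := fun h ↦ hπ.not_dvd_one (by simpa using dvd_sub h hα)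
  rw [← one_pow M, ← geom_sum₂_mul] at hαM
  exact hπ.pow_dvd_of_dvd_mul_left n (not_dvd_geom_sum₂ hπ (by simpa using hα) hπα hM) hαM

theorem le_mul_pow_of_le_rpow_three_halves {y X C B : ℝ} (hy : 0 < y) (hX : 0 ≤ X)
    (hyX : y ≤ C * X ^ (3 / 2 : ℝ)) (hXy : X ^ 2 ≤ B * y) : y ≤ C ^ 4 * B ^ 3 := by
  have hX6 : (X ^ (3 / 2 : ℝ)) ^ 4 = (X ^ 2) ^ 3 := by
    rw [← Real.rpow_natCast, ← Real.rpow_mul hX, ← pow_mul, ← Real.rpow_natCast X]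
    norm_num
  have h4 : y * y ^ 3 ≤ C ^ 4 * B ^ 3 * y ^ 3 :=
    calc y * y ^ 3 = y ^ 4 := by ring
      _ ≤ (C * X ^ (3 / 2 : ℝ)) ^ 4 := pow_le_pow_left₀ hy.le hyX 4
      _ = C ^ 4 * (X ^ 2) ^ 3 := by rw [mul_pow, hX6]
      _ ≤ C ^ 4 * (B * y) ^ 3 := by gcongr
      _ = C ^ 4 * B ^ 3 * y ^ 3 := by ring
  exact le_of_mul_le_mul_right h4 (by positivity)

section DedekindDomain

variable {R : Type*} [CommRing R]

theorem mulSupport_ite_dvd_subset {M : Type*} [One M] (I : Ideal R)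
    (f : HeightOneSpectrum R → M) :
    Function.mulSupport (fun v ↦ if v.asIdeal ∣ I then f v else 1) ⊆ {v | v.asIdeal ∣ I} :=
  fun _ hv ↦ by_contra fun h ↦ hv (if_neg h)

variable [IsDedekindDomain R]

def Ideal.IsPowerful (I : Ideal R) : Prop :=
  ∀ v : HeightOneSpectrum R, v.asIdeal ∣ I → v.asIdeal ^ 2 ∣ I

theorem Ideal.IsPowerful.prod_sq_dvd {I : Ideal R} (hI : I.IsPowerful)
    (s : Finset (HeightOneSpectrum R)) (hs : ∀ v ∈ s, v.asIdeal ∣ I) :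
    ∏ v ∈ s, v.asIdeal ^ 2 ∣ I := by
  refine Finset.prod_dvd_of_coprime (fun v _ w _ hvw ↦ ?_) fun v hv ↦ hI v (hs v hv)
  refine IsCoprime.pow (Ideal.isCoprime_iff_sup_eq.mpr ?_)
  exact v.isMaximal.coprime_of_ne w.isMaximal fun h ↦ hvw (HeightOneSpectrum.ext h)

theorem exists_prime_not_sq_dvd_of_not_isPowerful [IsPrincipalIdealRing R] {m : R}
    (hm : ¬ (Ideal.span {m}).IsPowerful) : ∃ π : R, Prime π ∧ π ∣ m ∧ ¬ π ^ 2 ∣ m := by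
  obtain ⟨v, hv, hv2⟩ : ∃ v : HeightOneSpectrum R,
      v.asIdeal ∣ Ideal.span {m} ∧ ¬ v.asIdeal ^ 2 ∣ Ideal.span {m} := by
    simpa [Ideal.IsPowerful] using hm
  obtain ⟨π, hπ⟩ := (IsPrincipalIdealRing.principal v.asIdeal).principal
  rw [Ideal.submodule_span_eq] at hπ
  have hπ0 : π ≠ 0 := by rintro rfl; exact v.ne_bot (by simpa using hπ)
  rw [hπ, Ideal.span_singleton_dvd_span_singleton_iff_dvd] at hv
  rw [hπ, Ideal.span_singleton_pow, Ideal.span_singleton_dvd_span_singleton_iff_dvd] at hv2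
  exact ⟨π, (Ideal.span_singleton_prime hπ0).mp (hπ ▸ v.isPrime), hv, hv2⟩

theorem hasFiniteMulSupport_ite_dvd {M : Type*} [One M] {I : Ideal R} (hI : I ≠ ⊥)
    (f : HeightOneSpectrum R → M) :
    Function.HasFiniteMulSupport fun v ↦ if v.asIdeal ∣ I then f v else 1 :=
  (Ideal.finite_factors hI).subset (mulSupport_ite_dvd_subset I f)

variable [Module.Free ℤ R] [Module.Finite ℤ R]

theorem Ideal.IsPowerful.finprod_absNorm_sq_le {I : Ideal R} (hI : I.IsPowerful) (hI0 : I ≠ ⊥) :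
    (∏ᶠ v : HeightOneSpectrum R, if v.asIdeal ∣ I then (absNorm v.asIdeal : ℝ) else 1) ^ 2
      ≤ absNorm I := by
  set s := (Ideal.finite_factors hI0).toFinset
  have hs : ∀ v, v ∈ s ↔ v.asIdeal ∣ I := fun v ↦ Set.Finite.mem_toFinset _
  rw [finprod_eq_prod_of_mulSupport_subset _ (s := s)
      fun v hv ↦ (hs v).mpr (mulSupport_ite_dvd_subset I _ hv), ← Finset.prod_pow,
    Finset.prod_congr rfl fun v hv ↦ by rw [if_pos ((hs v).mp hv)]]
  have hdvd := map_dvd absNorm (hI.prod_sq_dvd s fun v ↦ (hs v).mp)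
  simp only [map_prod, map_pow] at hdvd
  have hpos : 0 < absNorm I := Nat.pos_of_ne_zero (by simpa [absNorm_eq_zero_iff] using hI0)
  exact_mod_cast Nat.le_of_dvd hpos hdvd

end DedekindDomain

theorem NumberField.InfinitePlace.apply_neg_one {K : Type*} [Field K] (w : InfinitePlace K) :
    w (-1) = 1 := by
  rw [← InfinitePlace.norm_embedding_eq, map_neg, map_one, norm_neg, norm_one]

section NumberField

variable {K}

theorem Prime.not_dvd_absNormElem_sub_one {π : 𝓞 K} (hπ : Prime π) :
    ¬ π ∣ ((absNormElem K π - 1 : ℕ) : 𝓞 K) := by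
  have hdvd : π ∣ (absNormElem K π : 𝓞 K) := by
    rw [← Ideal.mem_span_singleton, absNormElem, ← Ideal.absNorm_span_singleton]
    exact Ideal.absNorm_mem _
  have hpos : 1 ≤ absNormElem K π := by
    rw [Nat.one_le_iff_ne_zero, absNormElem, ← Ideal.absNorm_span_singleton, Ne,
      Ideal.absNorm_eq_zero_iff, Ideal.span_singleton_eq_bot]
    exact hπ.ne_zero
  rw [Nat.cast_sub hpos, Nat.cast_one]
  exact fun h ↦ hπ.not_dvd_one (by simpa using dvd_sub hdvd h)

theorem Prime.sq_dvd_pow_sub_one_of_wieferich {π : 𝓞 K} (hπ : Prime π) {u : 𝓞 K}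
    (hW : π ^ 2 ∣ u ^ (absNormElem K π - 1) - 1) {n : ℕ} (hn : π ∣ u ^ n - 1) :
    π ^ 2 ∣ u ^ n - 1 := by
  refine hπ.pow_dvd_sub_one_of_pow_dvd_pow_sub_one hn hπ.not_dvd_absNormElem_sub_one ?_
  rw [← pow_mul, mul_comm, pow_mul]
  exact hW.trans (sub_one_dvd_pow_sub_one _ n)

theorem absNormElem_unit_mul (u : (𝓞 K)ˣ) (x : 𝓞 K) :
    absNormElem K (u * x) = absNormElem K x := by
  rw [absNormElem, absNormElem, ← Ideal.absNorm_span_singleton, ← Ideal.absNorm_span_singleton,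
    Ideal.span_singleton_mul_left_unit u.isUnit]

theorem infinite_setOf_nonWieferich {η : (𝓞 K)ˣ} (hη : ¬ IsOfFinOrder η) {π : 𝓞 K}
    (hπ : Prime π) (hW : ¬ π ^ 2 ∣ (η : 𝓞 K) ^ (absNormElem K π - 1) - 1) :
    {π : 𝓞 K | Prime π ∧ ¬ π ^ 2 ∣ (η : 𝓞 K) ^ (absNormElem K π - 1) - 1}.Infinite := by
  refine Set.infinite_of_injective_forall_mem (f := fun k : ℕ ↦ ((η ^ k : (𝓞 K)ˣ) : 𝓞 K) * π)
    (fun k l hkl ↦ injective_pow_iff_not_isOfFinOrder.mpr hη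
      (Units.val_injective (mul_right_cancel₀ hπ.ne_zero hkl))) fun k ↦ ?_
  refine ⟨(associated_unit_mul_left π _ (η ^ k).isUnit).symm.prime hπ, ?_⟩
  rwa [absNormElem_unit_mul, mul_pow, ← Units.val_pow_eq_pow_val, Units.mul_left_dvd]

theorem normAtFin_eq_zpow {v : HeightOneSpectrum (𝓞 K)} {y : 𝓞 K} {γ : Multiplicative ℤ}
    (hγ : v.intValuation y = γ) :
    normAtFin K v y = (Ideal.absNorm v.asIdeal : ℝ) ^ Multiplicative.toAdd γ := by
  have hv : v.valuation K y = γ := by rw [HeightOneSpectrum.valuation_of_algebraMap, hγ]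
  rw [normAtFin, dif_neg (by simp [hv])]
  congr
  rw [← WithZero.coe_inj, WithZero.coe_unzero, hv]

theorem normAtFin_le_one (v : HeightOneSpectrum (𝓞 K)) (y : 𝓞 K) : normAtFin K v y ≤ 1 := by
  by_cases hy : y = 0
  · simp [normAtFin, hy]
  obtain ⟨γ, hγ⟩ := WithZero.ne_zero_iff_exists.mp (v.intValuation_ne_zero y hy)
  have hγ1 : γ ≤ 1 := by exact_mod_cast hγ ▸ v.intValuation_le_one y
  rw [normAtFin_eq_zpow hγ.symm]
  exact zpow_le_one_of_nonpos₀ (by exact_mod_cast (HeightOneSpectrum.one_lt_absNorm v).le) hγ1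

theorem normAtFin_eq_one_iff (v : HeightOneSpectrum (𝓞 K)) (y : 𝓞 K) :
    normAtFin K v y = 1 ↔ ¬ v.asIdeal ∣ Ideal.span {y} := by
  rw [← v.intValuation_lt_one_iff_dvd, not_lt]
  by_cases hy : y = 0
  · simp [normAtFin, hy]
  obtain ⟨γ, hγ⟩ := WithZero.ne_zero_iff_exists.mp (v.intValuation_ne_zero y hy)
  have hγ1 : γ ≤ 1 := by exact_mod_cast hγ ▸ v.intValuation_le_one y
  rw [normAtFin_eq_zpow hγ.symm, ← hγ,
    zpow_eq_one_iff_right₀ (by positivity)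
      (by exact_mod_cast (HeightOneSpectrum.one_lt_absNorm v).ne'),
    ← WithZero.coe_one, WithZero.coe_le_coe, toAdd_eq_zero]
  exact ⟨fun h ↦ h.ge, le_antisymm hγ1⟩

theorem normAtFin_unit (v : HeightOneSpectrum (𝓞 K)) (u : (𝓞 K)ˣ) :
    normAtFin K v (u : 𝓞 K) = 1 := by
  rw [normAtFin_eq_one_iff, Ideal.span_singleton_eq_top.mpr u.isUnit]
  exact fun h ↦ v.isPrime.ne_top (Ideal.dvd_iff_le.mp h |> top_le_iff.mp)

theorem normAtFin_neg_one (v : HeightOneSpectrum (𝓞 K)) : normAtFin K v (-1) = 1 := by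
  simpa using normAtFin_unit v (-1)

theorem normAtFin_one_sub_eq_one_iff (v : HeightOneSpectrum (𝓞 K)) (y : 𝓞 K) :
    normAtFin K v (1 - y) = 1 ↔ ¬ v.asIdeal ∣ Ideal.span {y - 1} := by
  rw [← Ideal.span_singleton_neg, neg_sub, ← normAtFin_eq_one_iff]
  push_cast
  rfl

variable (K) in
noncomputable def idealRad (I : Ideal (𝓞 K)) : ℝ :=
  ∏ᶠ v : HeightOneSpectrum (𝓞 K),
    if v.asIdeal ∣ I then (Ideal.absNorm v.asIdeal : ℝ) ^ ramIdxOverQ K v else 1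

theorem radK_unit (ε : (𝓞 K)ˣ) :
    radK K (ε : 𝓞 K) (-1) (1 - (ε : 𝓞 K)) = idealRad K (Ideal.span {(ε : 𝓞 K) - 1}) := by
  refine finprod_congr fun v ↦ ?_
  simp only [normAtFin_unit, normAtFin_neg_one, true_and, eq_comm (a := (1 : ℝ)),
    normAtFin_one_sub_eq_one_iff, ite_not]

theorem idealRad_nonneg (I : Ideal (𝓞 K)) : 0 ≤ idealRad K I :=
  finprod_nonneg fun v ↦ by split_ifs <;> positivity

theorem ramIdxOverQ_le_one {v : HeightOneSpectrum (𝓞 K)}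
    (hv : ¬ v.asIdeal ∣ differentIdeal ℤ (𝓞 K)) : ramIdxOverQ K v ≤ 1 := by
  by_contra! h
  have hp : v.asIdeal.under ℤ ≠ ⊥ := Ideal.under_ne_bot ℤ v.ne_bot
  have : (v.asIdeal.under ℤ).IsMaximal := Ideal.IsPrime.isMaximal inferInstance hp
  have hdvd : v.asIdeal ^ 2 ∣ (v.asIdeal.under ℤ).map (algebraMap ℤ (𝓞 K)) :=
    Ideal.dvd_iff_le.mpr (Ideal.le_pow_of_le_ramificationIdx' h)
  exact hv (by simpa using pow_sub_one_dvd_differentIdeal ℤ v.asIdeal 2 hp hdvd)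

theorem idealRad_le_mul_finprod {I : Ideal (𝓞 K)} (hI : I ≠ ⊥) :
    idealRad K I ≤ idealRad K (differentIdeal ℤ (𝓞 K)) *
      ∏ᶠ v : HeightOneSpectrum (𝓞 K),
        if v.asIdeal ∣ I then (Ideal.absNorm v.asIdeal : ℝ) else 1 := by
  have h𝔇 := hasFiniteMulSupport_ite_dvd (differentIdeal_ne_bot (A := ℤ) (B := 𝓞 K))
    fun v ↦ (Ideal.absNorm v.asIdeal : ℝ) ^ ramIdxOverQ K v
  have hN := hasFiniteMulSupport_ite_dvd hI fun v ↦ (Ideal.absNorm v.asIdeal : ℝ)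
  rw [idealRad, idealRad, ← finprod_mul_distrib h𝔇 hN]
  refine finprod_le_finprod (hasFiniteMulSupport_ite_dvd hI _)
    (fun v ↦ by split_ifs <;> positivity) (h𝔇.mul hN) fun v ↦ ?_
  have h1 : (1 : ℝ) ≤ Ideal.absNorm v.asIdeal := by
    exact_mod_cast (HeightOneSpectrum.one_lt_absNorm v).le
  dsimp only
  split_ifs with hvI hv𝔇 hv𝔇
  · exact le_mul_of_one_le_right (by positivity) h1
  · rw [one_mul]
    exact (pow_le_pow_right₀ h1 (ramIdxOverQ_le_one hv𝔇)).trans_eq (pow_one _)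
  · exact one_le_mul_of_one_le_of_one_le (one_le_pow₀ h1) le_rfl
  · rw [one_mul]

theorem Ideal.IsPowerful.idealRad_sq_le {I : Ideal (𝓞 K)} (hI : I.IsPowerful) (hI0 : I ≠ ⊥) :
    idealRad K I ^ 2 ≤ idealRad K (differentIdeal ℤ (𝓞 K)) ^ 2 * Ideal.absNorm I := by
  calc idealRad K I ^ 2
      ≤ (idealRad K (differentIdeal ℤ (𝓞 K)) *
          ∏ᶠ v : HeightOneSpectrum (𝓞 K),
            if v.asIdeal ∣ I then (Ideal.absNorm v.asIdeal : ℝ) else 1) ^ 2 :=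
        pow_le_pow_left₀ (idealRad_nonneg I) (idealRad_le_mul_finprod hI0) 2
    _ ≤ idealRad K (differentIdeal ℤ (𝓞 K)) ^ 2 * Ideal.absNorm I := by
        rw [mul_pow]
        exact mul_le_mul_of_nonneg_left (hI.finprod_absNorm_sq_le hI0) (sq_nonneg _)

theorem mulHeight₁_eq_prod_infinitePlace (x : 𝓞 K) :
    mulHeight₁ (x : K) = ∏ w : InfinitePlace K, max (w x) 1 ^ w.mult := by
  rw [NumberField.mulHeight₁_eq, finprod_congr fun v ↦ max_eq_right ?_, finprod_one, mul_one]
  exact FinitePlace.norm_embedding_eq v (x : K) ▸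
    FinitePlace.norm_le_one K (FinitePlace.maximalIdeal v) x

theorem one_lt_mulHeight₁ {x : 𝓞 K} (w₀ : InfinitePlace K) (hx : 1 < w₀ x) :
    1 < mulHeight₁ (x : K) := by
  rw [mulHeight₁_eq_prod_infinitePlace, ← Finset.mul_prod_erase _ _ (Finset.mem_univ w₀)]
  refine one_lt_mul_of_lt_of_le (one_lt_pow₀ (lt_max_of_lt_left hx) InfinitePlace.mult_ne_zero) ?_
  exact Finset.one_le_prod fun w _ ↦ one_le_pow₀ (le_max_right _ _)

theorem mulHeight₁_le_heightK (ε : (𝓞 K)ˣ) :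
    mulHeight₁ ((ε : 𝓞 K) : K) ≤ heightK K (ε : 𝓞 K) (-1) (1 - (ε : 𝓞 K)) := by
  have hfin : ∀ v : HeightOneSpectrum (𝓞 K), max (max (normAtFin K v (ε : 𝓞 K))
      (normAtFin K v (-1))) (normAtFin K v (1 - (ε : 𝓞 K))) = 1 := fun v ↦ by
    rw [normAtFin_unit, normAtFin_neg_one, max_self, max_eq_left]
    exact_mod_cast normAtFin_le_one v (1 - (ε : 𝓞 K))
  rw [heightK, finprod_congr hfin, finprod_one, one_mul, mulHeight₁_eq_prod_infinitePlace]
  refine Finset.prod_le_prod (fun _ _ ↦ by positivity) fun w _ ↦ ?_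
  have h1 : normAtInf K w (-1) = 1 := by rw [normAtInf, InfinitePlace.apply_neg_one, one_pow]
  refine le_max_of_le_left ?_
  rcases le_total (w (ε : 𝓞 K)) 1 with h | h
  · rw [max_eq_right h, one_pow, h1]
    exact le_max_right _ _
  · rw [max_eq_left h]
    exact le_max_left _ _

theorem absNormElem_eq_prod (x : 𝓞 K) :
    (absNormElem K x : ℝ) = ∏ w : InfinitePlace K, normAtInf K w x := by
  simp only [normAtInf]
  rw [InfinitePlace.prod_eq_abs_norm, ← Algebra.coe_norm_int]
  push_cast [absNormElem, Nat.cast_natAbs]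
  rfl

theorem absNormElem_sub_one_le (x : 𝓞 K) :
    (absNormElem K (x - 1) : ℝ) ≤ 4 ^ Fintype.card (InfinitePlace K) * mulHeight₁ (x : K) := by
  rw [absNormElem_eq_prod, mulHeight₁_eq_prod_infinitePlace, ← Finset.card_univ,
    ← Finset.prod_const, ← Finset.prod_mul_distrib]
  refine Finset.prod_le_prod (fun _ _ ↦ by unfold normAtInf; positivity) fun w _ ↦ ?_
  have hsub : w ((x - 1 : 𝓞 K) : K) ≤ 2 * max (w x) 1 := by
    push_cast
    calc w (x - 1 : K) = w (x + -1 : K) := by rw [sub_eq_add_neg]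
      _ ≤ w x + w (-1) := w.1.add_le _ _
      _ ≤ 2 * max (w x) 1 := by
          rw [InfinitePlace.apply_neg_one]
          linarith [le_max_left (w x) 1, le_max_right (w x) 1]
  calc normAtInf K w (x - 1 : 𝓞 K) ≤ (2 * max (w x) 1) ^ w.mult :=
        pow_le_pow_left₀ (w.1.nonneg _) hsub _
    _ = 2 ^ w.mult * max (w x) 1 ^ w.mult := mul_pow _ _ _
    _ ≤ 4 * max (w x) 1 ^ w.mult := by
        gcongr
        rw [InfinitePlace.mult]
        split_ifs <;> norm_num

theorem not_isOfFinOrder_of_one_lt_mulHeight₁ {η : (𝓞 K)ˣ}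
    (hη : 1 < mulHeight₁ ((η : 𝓞 K) : K)) : ¬ IsOfFinOrder η := by
  rw [isOfFinOrder_iff_pow_eq_one]
  rintro ⟨n, hn, hηn⟩
  have h := mulHeight₁_pow ((η : 𝓞 K) : K) n
  have h1 : ((η : 𝓞 K) : K) ^ n = 1 := by
    simpa using congrArg (fun u : (𝓞 K)ˣ ↦ ((u : 𝓞 K) : K)) hηn
  rw [h1, mulHeight₁_one] at h
  exact hη.ne' ((pow_eq_one_iff_of_nonneg (mulHeight₁_nonneg _) hn.ne').mp h.symm)

theorem radK_sq_le_of_isPowerful {ε : (𝓞 K)ˣ} (hε : (ε : 𝓞 K) - 1 ≠ 0)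
    (hpow : (Ideal.span {(ε : 𝓞 K) - 1}).IsPowerful) :
    radK K (ε : 𝓞 K) (-1) (1 - (ε : 𝓞 K)) ^ 2 ≤
      idealRad K (differentIdeal ℤ (𝓞 K)) ^ 2 * 4 ^ Fintype.card (InfinitePlace K) *
        mulHeight₁ ((ε : 𝓞 K) : K) := by
  rw [radK_unit, mul_assoc]
  refine (hpow.idealRad_sq_le ?_).trans (mul_le_mul_of_nonneg_left ?_ (sq_nonneg _))
  · rwa [Ne, Ideal.span_singleton_eq_bot]
  · rw [Ideal.absNorm_span_singleton]
    exact absNormElem_sub_one_le _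

theorem exists_not_isPowerful_pow_sub_one (habc : AbcConjecture K) {η : (𝓞 K)ˣ}
    (hη : 1 < mulHeight₁ ((η : 𝓞 K) : K)) :
    ∃ N : ℕ, ¬ (Ideal.span {(η : 𝓞 K) ^ N - 1}).IsPowerful := by
  obtain ⟨C, -, hC⟩ := habc (1 / 2) one_half_pos
  set B := idealRad K (differentIdeal ℤ (𝓞 K)) ^ 2 * 4 ^ Fintype.card (InfinitePlace K)
  obtain ⟨N, hN⟩ := pow_unbounded_of_one_lt (max (C ^ 4 * B ^ 3) 1) hη
  refine ⟨N, fun hpow ↦ ?_⟩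
  set ε := η ^ N
  have hεN : (ε : 𝓞 K) = (η : 𝓞 K) ^ N := Units.val_pow_eq_pow_val η N
  have hε : mulHeight₁ ((ε : 𝓞 K) : K) = mulHeight₁ ((η : 𝓞 K) : K) ^ N := by
    rw [hεN, ← mulHeight₁_pow]; push_cast; rfl
  have hε1 : (ε : 𝓞 K) - 1 ≠ 0 := fun h ↦ by
    rw [sub_eq_zero.mp h] at hε
    norm_num [mulHeight₁_one] at hε
    linarith [le_max_right (C ^ 4 * B ^ 3) 1]
  rw [← hεN] at hpow
  have hheight : mulHeight₁ ((ε : 𝓞 K) : K) ≤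
      C * radK K (ε : 𝓞 K) (-1) (1 - (ε : 𝓞 K)) ^ (3 / 2 : ℝ) := by
    have h := hC (ε : 𝓞 K) (-1) (1 - (ε : 𝓞 K)) (by exact_mod_cast ε.ne_zero) (by norm_num)
      (by exact_mod_cast (sub_ne_zero.mpr (sub_ne_zero.mp hε1).symm)) (by ring)
    rw [show (1 + 1 / 2 : ℝ) = 3 / 2 by norm_num] at h
    exact (mulHeight₁_le_heightK ε).trans h
  have := le_mul_pow_of_le_rpow_three_halves (by positivity)
    (by rw [radK_unit]; exact idealRad_nonneg _) hheight (radK_sq_le_of_isPowerful hε1 hpow)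
  linarith [le_max_left (C ^ 4 * B ^ 3) 1]

end NumberField

theorem infinitely_many_nonWieferich_primes_number_field
    (hclass : NumberField.classNumber K = 1)
    (habc : AbcConjecture K)
    (η : (𝓞 K)ˣ) (ψ : K →+* ℂ)
    (hη : 1 < ‖ψ (algebraMap (𝓞 K) K (η : 𝓞 K))‖) :
    {π : 𝓞 K | Prime π ∧
      ¬ (π ^ 2 ∣ (η : 𝓞 K) ^ (absNormElem K π - 1) - 1)}.Infinite := by
  have : IsPrincipalIdealRing (𝓞 K) := classNumber_eq_one_iff.mp hclass
  have hheight : 1 < mulHeight₁ ((η : 𝓞 K) : K) := one_lt_mulHeight₁ (InfinitePlace.mk ψ) hη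
  obtain ⟨N, hN⟩ := exists_not_isPowerful_pow_sub_one habc hheight
  obtain ⟨π, hπ, hdvd, hsq⟩ := exists_prime_not_sq_dvd_of_not_isPowerful hN
  exact infinite_setOf_nonWieferich (not_isOfFinOrder_of_one_lt_mulHeight₁ hheight) hπ
    fun hW ↦ hsq (hπ.sq_dvd_pow_sub_one_of_wieferich hW hdvd)
end

section
/- Let K be an algebraic number field of class number one and let ε be a unit of O_K. Fix n ∈ ℕ and write ε^n − 1 = u_n·v_n, where u_n is the squarefree part and v_n is the squarefull part of ε^n − 1. Then every prime element π of O_K dividing u_n is a non-Wieferich prime with respect to the base ε, i.e., ε^(N(π)−1) ≢ 1 (mod π²). -/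
/-!
Let `q = N(π)` and `d = gcd(n, q - 1)`. Since `π ∣ ε^n - 1` and, by Fermat's little theorem in
`𝓞 K ⧸ (π)`, `π ∣ ε^(q-1) - 1`, also `π ∣ ε^d - 1`. Write `q - 1 = d * k`; then
`ε^(q-1) - 1 = (ε^d - 1) * ∑_{i<k} ε^(d i)` and the sum is `≡ k (mod π)`. As `π ∣ q`, `π` cannot
divide the divisor `k` of `q - 1`, so `π² ∣ ε^(q-1) - 1` would give `π² ∣ ε^d - 1 ∣ ε^n - 1 = u v`,
which is impossible because `π` divides the squarefree `u` exactly once and is prime to `v`.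
-/

open NumberField Filter

variable (K : Type*) [Field K] [NumberField K]

theorem not_sq_dvd_mul_of_dvd_squarefree {R : Type*} [CommSemiring R] {π u v : R}
    (hπ : ¬IsUnit π) (hu : Squarefree u) (huv : IsCoprime u v) (hπu : π ∣ u) :
    ¬π ^ 2 ∣ u * v := fun h ↦
  hπ <| hu π <| sq π ▸ ((huv.of_isCoprime_of_dvd_left hπu).pow_left).dvd_of_dvd_mul_right h

theorem dvd_pow_gcd_sub_one {R : Type*} [CommRing R] {a x : R} {m n : ℕ}
    (hm : a ∣ x ^ m - 1) (hn : a ∣ x ^ n - 1) : a ∣ x ^ m.gcd n - 1 := by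
  simp only [← Ideal.mem_span_singleton, ← Ideal.Quotient.eq_zero_iff_mem, map_sub, map_pow,
    map_one, sub_eq_zero] at hm hn ⊢
  exact pow_gcd_eq_one.mpr ⟨hm, hn⟩

theorem sq_dvd_pow_sub_one_of_sq_dvd_pow_mul_sub_one {R : Type*} [CommRing R] [IsDomain R]
    {π x : R} {m k : ℕ} (hπ : Prime π) (hm : π ∣ x ^ m - 1) (hk : ¬π ∣ (k : R))
    (h : π ^ 2 ∣ x ^ (m * k) - 1) : π ^ 2 ∣ x ^ m - 1 := by
  have hsum : ¬π ∣ ∑ i ∈ Finset.range k, (x ^ m) ^ i := by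
    simpa using (dvd_geom_sum₂_iff_of_dvd_sub (n := k) (y := 1) hm).not.mpr (by simpa using hk)
  rw [pow_mul, ← geom_sum_mul] at h
  exact hπ.pow_dvd_of_dvd_mul_left 2 hsum h

namespace Ideal

variable {S : Type*} [CommRing S] [IsDedekindDomain S] [Module.Free ℤ S]

theorem pow_absNorm_sub_one_sub_one_mem {P : Ideal S} [P.IsMaximal] {x : S} (hx : x ∉ P) :
    x ^ (absNorm P - 1) - 1 ∈ P := by
  rcases eq_or_ne (absNorm P) 0 with h0 | h0
  · simp [h0]
  have : Finite (S ⧸ P) := (absNorm_ne_zero_iff P).mp h0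
  have : Fintype (S ⧸ P) := Fintype.ofFinite _
  let _ := Quotient.field P
  rw [← Quotient.eq_zero_iff_mem, map_sub, map_pow, map_one, sub_eq_zero, absNorm_apply,
    Submodule.cardQuot_apply, Nat.card_eq_fintype_card]
  exact FiniteField.pow_card_sub_one_eq_one _ (by rwa [ne_eq, Quotient.eq_zero_iff_mem])

theorem natCast_notMem_of_dvd_absNorm_sub_one {P : Ideal S} (hP : P ≠ ⊤) (h0 : absNorm P ≠ 0)
    {k : ℕ} (hk : k ∣ absNorm P - 1) : (k : S) ∉ P := by
  intro hkP
  have h1 : ((absNorm P - 1 : ℕ) : S) ∈ P := by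
    obtain ⟨j, hj⟩ := hk
    rw [hj, Nat.cast_mul]
    exact P.mul_mem_right _ hkP
  apply hP
  rw [eq_top_iff_one]
  simpa [Nat.cast_sub (Nat.one_le_iff_ne_zero.mpr h0)] using P.sub_mem (absNorm_mem P) h1

end Ideal

theorem nonWieferich_of_dvd_squarefree_part
    (ε : (𝓞 K)ˣ) (n : ℕ) (u v : 𝓞 K)
    (huv : (ε : 𝓞 K) ^ n - 1 = u * v)
    (hu : Squarefree u)
    (hcop : IsCoprime u v)
    (π : 𝓞 K) (hπ : Prime π) (hπu : π ∣ u) :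
    ¬ (π ^ 2 ∣ (ε : 𝓞 K) ^ (absNormElem K π - 1) - 1) := by
  intro hsq
  set P : Ideal (𝓞 K) := Ideal.span {π}
  have hq : absNormElem K π = Ideal.absNorm P := (Ideal.absNorm_span_singleton π).symm
  have hP0 : P ≠ ⊥ := by simpa [P] using hπ.ne_zero
  have hPmax : P.IsMaximal := ((Ideal.span_singleton_prime hπ.ne_zero).mpr hπ).isMaximal hP0
  have hεn : π ∣ (ε : 𝓞 K) ^ n - 1 := huv ▸ dvd_mul_of_dvd_left hπu v
  have hεq : π ∣ (ε : 𝓞 K) ^ (absNormElem K π - 1) - 1 := by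
    rw [hq, ← Ideal.mem_span_singleton]
    exact Ideal.pow_absNorm_sub_one_sub_one_mem fun h ↦
      hPmax.ne_top (P.eq_top_of_isUnit_mem h ε.isUnit)
  obtain ⟨k, hk⟩ := Nat.gcd_dvd_right n (absNormElem K π - 1)
  have hπk : ¬π ∣ (k : 𝓞 K) := by
    rw [← Ideal.mem_span_singleton]
    refine Ideal.natCast_notMem_of_dvd_absNorm_sub_one hPmax.ne_top
      (Ideal.absNorm_eq_zero_iff.not.mpr hP0) ?_
    rw [← hq]
    exact Dvd.intro_left _ hk.symm
  rw [hk] at hsq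
  have hd := sq_dvd_pow_sub_one_of_sq_dvd_pow_mul_sub_one hπ (dvd_pow_gcd_sub_one hεn hεq) hπk hsq
  obtain ⟨j, hj⟩ := Nat.gcd_dvd_left n (absNormElem K π - 1)
  refine not_sq_dvd_mul_of_dvd_squarefree hπ.not_isUnit hu hcop hπu ?_
  rw [← huv, hj]
  exact hd.trans (pow_one_sub_dvd_pow_mul_sub_one _ _ j)
end
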